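/- Let G=(V,E) be a graph with positive edge lengths ℓ and let D=(V,K) be the demand graph with edge weights given by the distance demands δ. Define the metric terminal pairs K' = {(u,v) ∈ K : the shortest uv-path distance in D−(u,v) with respect to δ is strictly greater than δ(u,v)}. Then a subgraph H=(V,E') satisfies d_H^ℓ(u,v) ≤ δ(u,v) for all (u,v) ∈ K if and only if it satisfies d_H^ℓ(u,v) ≤ δ(u,v) for all (u,v) ∈ K'. -/

import Mathlib

/-!
A non-metric demand pair `e = (u, v)` has a detour `u → ⋯ → v` in `D − e` of total demand at
most `δ e`; since demands are positive, every pair on that detour has demand strictly below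
`δ e`. Inducting on `δ` over the finitely many pairs, the detour pairs are satisfied in `H`, and
concatenating their `H`-paths satisfies `e`.
-/

/-- Walks in a (directed) graph given by an adjacency relation `E`:
`IsWalk E u v p` means `p` is the list of successive vertices visited after `u`
on a walk from `u` to `v` all of whose steps are edges of `E`. -/
def IsWalk {V : Type*} (E : V → V → Prop) : V → V → List V → Prop
  | u, v, [] => u = v
  | u, v, w :: rest => E u w ∧ IsWalk E w v rest

/-- Total length of the walk starting at `u` and visiting the vertices in `p`,
with respect to the length function `ℓ`. -/
def walkLen {V : Type*} (ℓ : V → V → ℚ) : V → List V → ℚ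
  | _, [] => 0
  | u, w :: rest => ℓ u w + walkLen ℓ w rest

/-- `DistLE E ℓ u v d` : the shortest-path distance from `u` to `v` w.r.t. `ℓ`
in the graph with edge relation `E` is at most `d` (in particular, finite). -/
def DistLE {V : Type*} (E : V → V → Prop) (ℓ : V → V → ℚ) (u v : V) (d : ℚ) : Prop :=
  ∃ p : List V, IsWalk E u v p ∧ walkLen ℓ u p ≤ d

section Walks

variable {V : Type*} {R : V → V → Prop} {L : V → V → ℚ}

theorem IsWalk.append {u v w : V} {p q : List V} (hp : IsWalk R u v p) (hq : IsWalk R v w q) :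
    IsWalk R u w (p ++ q) := by
  induction p generalizing u with
  | nil => cases hp; exact hq
  | cons a rest ih => exact ⟨hp.1, ih hp.2⟩

theorem IsWalk.walkLen_append {u v : V} {p : List V} (hp : IsWalk R u v p) (q : List V) :
    walkLen L u (p ++ q) = walkLen L u p + walkLen L v q := by
  induction p generalizing u with
  | nil => cases hp; simp [walkLen]
  | cons a rest ih => simp only [List.cons_append, walkLen, ih hp.2, add_assoc]

theorem IsWalk.walkLen_nonneg (hpos : ∀ a b, R a b → 0 < L a b) {u v : V} {p : List V}
    (hp : IsWalk R u v p) : 0 ≤ walkLen L u p := by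
  induction p generalizing u with
  | nil => simp [walkLen]
  | cons a rest ih => exact add_nonneg (hpos u a hp.1).le (ih hp.2)

theorem IsWalk.restrict_of_walkLen_lt (hpos : ∀ a b, R a b → 0 < L a b) {B : ℚ} {u v : V}
    {p : List V} (hp : IsWalk R u v p) (hlen : walkLen L u p < B) :
    IsWalk (fun a b => R a b ∧ L a b < B) u v p := by
  induction p generalizing u with
  | nil => exact hp
  | cons a rest ih =>
    have hstep := hpos u a hp.1
    have hrest := hp.2.walkLen_nonneg hpos
    simp only [walkLen] at hlen
    exact ⟨⟨hp.1, by linarith⟩, ih hp.2 (by linarith)⟩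

/-- Avoiding the step `u → v` forces at least two steps, each then strictly shorter than `B`. -/
theorem IsWalk.restrict_of_walkLen_le (hpos : ∀ a b, R a b → 0 < L a b) {B : ℚ} {u v : V}
    {p : List V} (hp : IsWalk R u v p) (hlen : walkLen L u p ≤ B) (huv : ¬ R u v) :
    IsWalk (fun a b => R a b ∧ L a b < B) u v p := by
  match p, hp with
  | [], hp => exact hp
  | [w], ⟨huw, hwv⟩ => cases hwv; exact absurd huw huv
  | w :: x :: rest, ⟨huw, hwx, hrest⟩ =>
    have hfirst := hpos u w huw
    have hsecond := hpos w x hwx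
    have htail := hrest.walkLen_nonneg hpos
    simp only [walkLen] at hlen
    exact ⟨⟨huw, by linarith⟩, IsWalk.restrict_of_walkLen_lt hpos ⟨hwx, hrest⟩
      (by simp only [walkLen]; linarith)⟩

end Walks

section Distances

variable {V : Type*} {E : V → V → Prop} {L : V → V → ℚ}

theorem DistLE.mono {u v : V} {d d' : ℚ} (h : DistLE E L u v d) (hd : d ≤ d') :
    DistLE E L u v d' :=
  let ⟨p, hp, hlen⟩ := h
  ⟨p, hp, hlen.trans hd⟩

theorem DistLE.trans {u v w : V} {d₁ d₂ : ℚ} (h₁ : DistLE E L u v d₁) (h₂ : DistLE E L v w d₂) :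
    DistLE E L u w (d₁ + d₂) := by
  obtain ⟨p, hp, hlp⟩ := h₁
  obtain ⟨q, hq, hlq⟩ := h₂
  exact ⟨p ++ q, hp.append hq, by rw [hp.walkLen_append]; exact add_le_add hlp hlq⟩

theorem DistLE.of_isWalk {R : V → V → Prop} {δ : V → V → ℚ}
    (hR : ∀ a b, R a b → DistLE E L a b (δ a b)) {u v : V} {p : List V} (hp : IsWalk R u v p) :
    DistLE E L u v (walkLen δ u p) := by
  induction p generalizing u with
  | nil => cases hp; exact ⟨[], rfl, le_rfl⟩
  | cons a rest ih => exact (hR u a hp.1).trans (ih hp.2)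

end Distances

theorem metric_terminal_pairs_suffice_general
    {V : Type*} [Fintype V]
    (K : Set (V × V))
    (ℓ : V × V → ℚ) (δ : V × V → ℚ)
    (hδpos : ∀ e ∈ K, 0 < δ e)
    (E' : Set (V × V))
    (K' : Set (V × V))
    (hK' : K' = {e ∈ K |
      ¬ DistLE (fun a b => (a, b) ∈ K ∧ (a, b) ≠ e) (fun a b => δ (a, b))
        e.1 e.2 (δ e)}) :
    (∀ e ∈ K, DistLE (fun a b => (a, b) ∈ E') (fun a b => ℓ (a, b)) e.1 e.2 (δ e)) ↔
    (∀ e ∈ K', DistLE (fun a b => (a, b) ∈ E') (fun a b => ℓ (a, b)) e.1 e.2 (δ e)) := by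
  subst hK'
  refine ⟨fun h e he => h e he.1, fun h e he => ?_⟩
  induction e using (Finite.wellFounded_of_trans_of_irrefl (InvImage (· < ·) δ)).induction
    with | _ e ih
  by_cases hmetric : DistLE (fun a b => (a, b) ∈ K ∧ (a, b) ≠ e) (fun a b => δ (a, b))
    e.1 e.2 (δ e)
  · obtain ⟨p, hp, hlen⟩ := hmetric
    have hdetour := hp.restrict_of_walkLen_le (fun a b hab => hδpos (a, b) hab.1) hlen
      (fun hne => hne.2 rfl)
    exact (DistLE.of_isWalk (fun a b hab => ih (a, b) hab.2 hab.1.1) hdetour).mono hlen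
  · exact h e ⟨he, hmetric⟩

/-- a subgraph `H = (V, E')` satisfies all distance demands for the
terminal pairs `K` iff it satisfies them for the metric terminal pairs `K'`. -/
theorem metric_terminal_pairs_suffice
    {V : Type*} [Fintype V]
    (E : Set (V × V)) (K : Set (V × V))
    (ℓ : V × V → ℚ) (δ : V × V → ℚ)
    (hℓpos : ∀ e ∈ E, 0 < ℓ e) (hδpos : ∀ e ∈ K, 0 < δ e)
    (E' : Set (V × V)) (hE' : E' ⊆ E)
    (K' : Set (V × V))
    (hK' : K' = {e ∈ K |
      ¬ DistLE (fun a b => (a, b) ∈ K ∧ (a, b) ≠ e) (fun a b => δ (a, b))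
        e.1 e.2 (δ e)}) :
    (∀ e ∈ K, DistLE (fun a b => (a, b) ∈ E') (fun a b => ℓ (a, b)) e.1 e.2 (δ e)) ↔
    (∀ e ∈ K', DistLE (fun a b => (a, b) ∈ E') (fun a b => ℓ (a, b)) e.1 e.2 (δ e)) :=
  metric_terminal_pairs_suffice_general K ℓ δ hδpos E' K' hK'
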